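/- For every positive integer n, n(n + 7/4)/3 ≤ G(n) ≤ n(n+2)/3. -/
import Mathlib


open Finset

/-- The largest odd divisor of `k`. -/
def oddPart (k : ℕ) : ℕ := ordCompl[2] k

/-- `V n = ∑_{k=1}^n α(k)/k` as a rational number. -/
def V (n : ℕ) : ℚ := ∑ k ∈ Finset.Icc 1 n, (oddPart k : ℚ) / k

/-- `v n = V n - 2n/3`. -/
def v (n : ℕ) : ℚ := V n - 2 * n / 3

/-- `U n = ∑_{k=1}^n α(k)`. -/
def U (n : ℕ) : ℕ := ∑ k ∈ Finset.Icc 1 n, oddPart k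

/-- `G n = ∑_{k=1}^n (n+1-k)·α(k)/k` as a rational number. -/
def G (n : ℕ) : ℚ := ∑ k ∈ Finset.Icc 1 n, ((n : ℚ) + 1 - k) * (oddPart k : ℚ) / k

/-- `g n = n(n+2)/3 - G n`. -/
def g (n : ℕ) : ℚ := n * (n + 2) / 3 - G n

lemma oddPart_odd {k : ℕ} (h : Odd k) : oddPart k = k := by
  unfold oddPart
  rw [Nat.factorization_eq_zero_of_not_dvd (by simpa [Nat.odd_iff, Nat.two_dvd_ne_zero] using h)]
  simp

lemma oddPart_two_mul (k : ℕ) : oddPart (2 * k) = oddPart k := by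
  rcases Nat.eq_zero_or_pos k with rfl | hk
  · simp [oddPart]
  · unfold oddPart
    rw [Nat.ordCompl_mul]
    norm_num

lemma V_succ (n : ℕ) : V (n + 1) = V n + (oddPart (n+1) : ℚ) / (n+1) := by
  unfold V
  rw [Finset.sum_Icc_succ_top (by omega)]
  push_cast
  ring

lemma V_two_mul (n : ℕ) : V (2 * n) = n + V n / 2 := by
  induction n with
  | zero => simp [V]
  | succ m ih =>
    have h1 : 2 * (m + 1) = (2 * m + 1) + 1 := by ring
    have hodd : oddPart (2*m+1) = 2*m+1 := oddPart_odd ⟨m, by ring⟩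
    have h2 : V (2*m+1) = V (2*m) + 1 := by
      rw [V_succ, hodd]
      have : ((2*m+1 : ℕ) : ℚ) ≠ 0 := by positivity
      push_cast at this ⊢
      field_simp
    rw [h1, V_succ, h2, ih, V_succ]
    rw [show (2*m+1+1) = 2*(m+1) by ring, oddPart_two_mul]
    push_cast
    have : ((m:ℚ)+1) ≠ 0 := by positivity
    field_simp
    ring

lemma V_odd (n : ℕ) : V (2 * n + 1) = (n + 1) + V n / 2 := by
  rw [V_succ, V_two_mul, oddPart_odd ⟨n, by ring⟩]
  have : ((2*n+1 : ℕ) : ℚ) ≠ 0 := by positivity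
  push_cast at this ⊢
  field_simp
  ring

lemma v_two_mul (n : ℕ) : v (2 * n) = v n / 2 := by
  unfold v; rw [V_two_mul]; push_cast; ring

lemma v_odd (n : ℕ) : v (2 * n + 1) = v n / 2 + 1/3 := by
  unfold v; rw [V_odd]; push_cast; ring

lemma v_bound (n : ℕ) : 0 ≤ v n ∧ v n ≤ 2/3 := by
  induction n using Nat.strong_induction_on with
  | _ n ih =>
    match n with
    | 0 => norm_num [v, V]
    | (m+1) =>
      rcases Nat.even_or_odd (m+1) with ⟨k, hk⟩ | ⟨k, hk⟩
      · have hk' : m + 1 = 2 * k := by omega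
        have hlt : k < m + 1 := by omega
        obtain ⟨h1, h2⟩ := ih k hlt
        rw [hk', v_two_mul]
        constructor <;> linarith
      · have hlt : k < m + 1 := by omega
        obtain ⟨h1, h2⟩ := ih k hlt
        rw [hk, v_odd]
        constructor <;> linarith

/-- `S n = G n - n(n+1)/3 = ∑_{m=1}^n v(m)`. -/
def S (n : ℕ) : ℚ := G n - n * (n + 1) / 3

lemma G_succ (n : ℕ) : G (n + 1) = G n + V (n + 1) := by
  unfold G V
  have : ∀ k ∈ Finset.Icc 1 (n+1), ((n+1 : ℕ) + 1 - k : ℚ) * (oddPart k : ℚ) / k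
      = ((n : ℚ) + 1 - k) * (oddPart k : ℚ) / k + (oddPart k : ℚ) / k := by
    intro k hk
    push_cast
    ring
  rw [Finset.sum_congr rfl this, Finset.sum_add_distrib,
    Finset.sum_Icc_succ_top (show 1 ≤ n+1 by omega)]
  push_cast
  ring

lemma S_succ (n : ℕ) : S (n + 1) = S n + v (n + 1) := by
  unfold S v
  rw [G_succ]
  push_cast
  ring

lemma S_two_mul (n : ℕ) : S (2 * n) = n / 3 + S n - v n / 2 := by
  induction n with
  | zero => norm_num [S, G, v, V]
  | succ m ih =>
    have h1 : 2 * (m + 1) = (2 * m + 1) + 1 := by ring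
    rw [h1, S_succ, show (2*m+1+1) = 2*(m+1) by ring, v_two_mul,
      show (2*m+1) = 2*m+1 from rfl, S_succ, v_odd, ih, S_succ]
    push_cast
    ring

lemma S_odd (n : ℕ) : S (2 * n + 1) = (n + 1) / 3 + S n := by
  rw [S_succ, S_two_mul, v_odd]
  ring

lemma S_upper (n : ℕ) : S n ≤ n / 3 := by
  induction n using Nat.strong_induction_on with
  | _ n ih =>
    match n with
    | 0 => norm_num [S, G]
    | (m+1) =>
      rcases Nat.even_or_odd (m+1) with ⟨k, hk⟩ | ⟨k, hk⟩
      · have hk' : m + 1 = 2 * k := by omega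
        have hlt : k < m + 1 := by omega
        have h1 := ih k hlt
        have h2 := (v_bound k).1
        rw [hk', S_two_mul]
        push_cast [hk']
        linarith
      · have hlt : k < m + 1 := by omega
        have h1 := ih k hlt
        rw [hk, S_odd]
        push_cast [hk]
        linarith

lemma S_lower (n : ℕ) : (n : ℚ) / 4 ≤ S n ∧ (n : ℚ) / 4 + v n / 2 - 1/12 ≤ S n := by
  induction n using Nat.strong_induction_on with
  | _ n ih =>
    match n with
    | 0 => norm_num [S, G, v, V]
    | 1 => norm_num [S, G, v, V, oddPart]
    | (m+2) =>
      rcases Nat.even_or_odd (m+2) with ⟨k, hk⟩ | ⟨k, hk⟩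
      · have hk' : m + 2 = 2 * k := by omega
        have hk1 : 1 ≤ k := by omega
        have hlt : k < m + 2 := by omega
        obtain ⟨h1, h2⟩ := ih k hlt
        obtain ⟨hv1, hv2⟩ := v_bound k
        have hv3 : v k ≤ k / 3 := by
          rcases Nat.lt_or_ge k 2 with hc | hc
          · interval_cases k
            · norm_num [v, V, oddPart]
          · have : (2:ℚ) ≤ k := by exact_mod_cast hc
            linarith
        rw [hk', S_two_mul, v_two_mul]
        have hkq : (1:ℚ) ≤ k := by exact_mod_cast hk1
        push_cast [hk']
        constructor <;> linarith
      · have hk1 : 1 ≤ k := by omega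
        have hlt : k < m + 2 := by omega
        obtain ⟨h1, h2⟩ := ih k hlt
        obtain ⟨hv1, hv2⟩ := v_bound k
        have hkq : (1:ℚ) ≤ k := by exact_mod_cast hk1
        rw [hk, S_odd, v_odd]
        push_cast [hk]
        constructor <;> linarith

theorem stmt14 (n : ℕ) (hn : 0 < n) :
    (n : ℚ) * (n + 7 / 4) / 3 ≤ G n ∧ G n ≤ (n : ℚ) * (n + 2) / 3 := by
  have h1 := (S_lower n).1
  have h2 := S_upper n
  unfold S at h1 h2
  constructor <;> nlinarith [h1, h2]
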